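/- Let φ₁ : DihedralGroup 4 →* DihedralGroup 12 be the homomorphism induced by the additive map ZMod 4 → ZMod 12, i ↦ 3i, and φ₂ : DihedralGroup 4 →* DihedralGroup 8 the one induced by i ↦ 2i (both injective). Then there is a group isomorphism Ψ from the amalgamated free product (DihedralGroup 12) *_{DihedralGroup 4} (DihedralGroup 8) (the pushout of φ₁ and φ₂) onto GL⁺(2,ℤ) such that Ψ(ι₁(r 1)) = û, Ψ(ι₂(r 1)) = ŝ, and Ψ(ι₂(sr 0)) = r̂. (This is the decomposition GL⁺(2,ℤ) ≅ D₁₆ *_{D₈} D₂₄.) -/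

import Mathlib

/-- The three generators `û`, `ŝ`, `r̂` of the Pin⁺ cover of `GL(2,ℤ)`. -/
inductive GLGen
  | u | s | r

/-- The relators `ŝ⁸`, `r̂²`, `r̂ŝr̂⁻¹ŝ`, `r̂ûr̂⁻¹û`, `ŝ²û⁻³`. -/
def glRels : Set (FreeGroup GLGen) :=
  { (FreeGroup.of GLGen.s) ^ 8,
    (FreeGroup.of GLGen.r) ^ 2,
    FreeGroup.of GLGen.r * FreeGroup.of GLGen.s * (FreeGroup.of GLGen.r)⁻¹ * FreeGroup.of GLGen.s,
    FreeGroup.of GLGen.r * FreeGroup.of GLGen.u * (FreeGroup.of GLGen.r)⁻¹ * FreeGroup.of GLGen.u,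
    (FreeGroup.of GLGen.s) ^ 2 * ((FreeGroup.of GLGen.u) ^ 3)⁻¹ }

/-- The Pin⁺ cover `GL⁺(2,ℤ) = ⟨û, ŝ, r̂ ∣ ŝ⁸ = 1, r̂² = 1, r̂ŝr̂⁻¹ = ŝ⁻¹,
r̂ûr̂⁻¹ = û⁻¹, ŝ² = û³⟩` of `GL(2,ℤ)`. -/
abbrev GLplus : Type := PresentedGroup glRels

/-- The generator `û` of `GL⁺(2,ℤ)`. -/
def uhat : GLplus := PresentedGroup.of GLGen.u

/-- The generator `ŝ` of `GL⁺(2,ℤ)`. -/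
def shat : GLplus := PresentedGroup.of GLGen.s

/-- The generator `r̂` of `GL⁺(2,ℤ)`. -/
def rhat : GLplus := PresentedGroup.of GLGen.r

/-- The two factors `D₂₄ = DihedralGroup 12` (at `false`) and `D₁₆ = DihedralGroup 8`
(at `true`) of the amalgamated free product. -/
def Fac : Bool → Type
  | false => DihedralGroup 12
  | true => DihedralGroup 8

instance instFacGroup : ∀ b, Group (Fac b)
  | false => inferInstanceAs (Group (DihedralGroup 12))
  | true => inferInstanceAs (Group (DihedralGroup 8))

/-- The family of amalgamating maps `D₈ → D₂₄` and `D₈ → D₁₆`. -/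
def fam (φ₁ : DihedralGroup 4 →* DihedralGroup 12) (φ₂ : DihedralGroup 4 →* DihedralGroup 8) :
    ∀ b, DihedralGroup 4 →* Fac b
  | false => φ₁
  | true => φ₂

/-!
The dihedral relations hold for `(û, r̂)` with `û¹² = (ŝ²)⁴ = 1` and for `(ŝ, r̂)`, so `r ↦ û`,
`sr ↦ r̂` and `r ↦ ŝ`, `sr ↦ r̂` define homomorphisms `D₂₄ → GL⁺(2,ℤ)` and `D₁₆ → GL⁺(2,ℤ)`,
which agree on `D₈` because `û³ = ŝ²`; they induce a map out of the amalgam. Conversely, the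
images of `r` in both factors and of `sr` in `D₁₆` satisfy the relators of `GL⁺(2,ℤ)`: the
dihedral ones hold inside a factor (for `r̂ûr̂⁻¹ = û⁻¹` after identifying the two copies of `sr`),
and `ŝ² = û³` because `r²` in `D₁₆` and `r³` in `D₂₄` are both the image of `r` in `D₈`.
The two homomorphisms are mutually inverse on generators.
-/

section PowVal

variable {M : Type*} [Monoid M] {n : ℕ} {a : M}

theorem pow_zmod_val_natCast (ha : a ^ n = 1) (k : ℕ) : a ^ (k : ZMod n).val = a ^ k := by
  rw [ZMod.val_natCast, ← pow_eq_pow_mod k ha]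

theorem pow_zmod_val_add [NeZero n] (ha : a ^ n = 1) (i j : ZMod n) :
    a ^ (i + j).val = a ^ i.val * a ^ j.val := by
  rw [← pow_add, ← pow_zmod_val_natCast ha (i.val + j.val), Nat.cast_add, ZMod.natCast_zmod_val,
    ZMod.natCast_zmod_val]

end PowVal

namespace DihedralGroup

variable {G : Type*} [Group G] {n : ℕ}

theorem hom_ext {f g : DihedralGroup n →* G} (hr : f (r 1) = g (r 1))
    (hsr : f (sr 0) = g (sr 0)) : f = g := by
  have hr' (i : ZMod n) : f (r i) = g (r i) := by
    rw [← ZMod.intCast_zmod_cast i, ← r_one_zpow, map_zpow, map_zpow, hr]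
  ext (i | i)
  · exact hr' i
  · rw [← zero_add i, ← sr_mul_r, map_mul, map_mul, hsr, hr']

theorem sr_mul_r_mul_sr_inv (i j : ZMod n) : sr i * r j * (sr i)⁻¹ = (r j)⁻¹ := by
  simp [sr_mul_r, inv_sr, sr_mul_sr, inv_r]

variable [NeZero n] {a b : G}

def lift (ha : a ^ n = 1) (hb : b ^ 2 = 1) (hab : b * a * b⁻¹ = a⁻¹) :
    DihedralGroup n →* G where
  toFun
    | r i => a ^ i.val
    | sr i => b * a ^ i.val
  map_one' := by
    show a ^ (0 : ZMod n).val = 1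
    rw [ZMod.val_zero, pow_zero]
  map_mul' := by
    have hbb : b * b = 1 := by rw [← pow_two, hb]
    have hconj (k : ℕ) : b * a ^ k * b = (a ^ k)⁻¹ := by
      have h := conj_pow (a := b) (b := a) (i := k)
      rwa [hab, inv_eq_of_mul_eq_one_left hbb, inv_pow, eq_comm] at h
    have hsub (i j : ZMod n) : a ^ (j - i).val = (a ^ i.val)⁻¹ * a ^ j.val := by
      rw [eq_inv_mul_iff_mul_eq, ← pow_zmod_val_add ha, add_sub_cancel]
    rintro (i | i) (j | j)
    · exact pow_zmod_val_add ha i j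
    · show b * a ^ (j - i).val = a ^ i.val * (b * a ^ j.val)
      simp only [hsub, ← hconj, ← mul_assoc, hbb, one_mul]
    · show b * a ^ (i + j).val = b * a ^ i.val * a ^ j.val
      rw [pow_zmod_val_add ha, mul_assoc]
    · show a ^ (j - i).val = b * a ^ i.val * (b * a ^ j.val)
      rw [hsub, ← hconj, mul_assoc]

variable {ha : a ^ n = 1} {hb : b ^ 2 = 1} {hab : b * a * b⁻¹ = a⁻¹}

@[simp] theorem lift_r (i : ZMod n) : lift ha hb hab (r i) = a ^ i.val := rfl

@[simp] theorem lift_sr (i : ZMod n) : lift ha hb hab (sr i) = b * a ^ i.val := rfl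

theorem lift_r_one : lift ha hb hab (r 1) = a := by
  rw [lift_r, ← Nat.cast_one, pow_zmod_val_natCast ha, pow_one]

theorem lift_sr_zero : lift ha hb hab (sr 0) = b := by
  rw [lift_sr, ZMod.val_zero, pow_zero, mul_one]

end DihedralGroup

open DihedralGroup

theorem shat_pow_eight : shat ^ 8 = 1 := by
  have h := PresentedGroup.one_of_mem (rels := glRels) (x := .of .s ^ 8) (by simp [glRels])
  rwa [map_pow] at h

theorem rhat_sq : rhat ^ 2 = 1 := by
  have h := PresentedGroup.one_of_mem (rels := glRels) (x := .of .r ^ 2) (by simp [glRels])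
  rwa [map_pow] at h

theorem rhat_mul_shat_mul_rhat_inv : rhat * shat * rhat⁻¹ = shat⁻¹ := by
  have h := PresentedGroup.one_of_mem (rels := glRels)
    (x := .of .r * .of .s * (.of .r)⁻¹ * .of .s) (by simp [glRels])
  rwa [map_mul, mul_eq_one_iff_eq_inv] at h

theorem rhat_mul_uhat_mul_rhat_inv : rhat * uhat * rhat⁻¹ = uhat⁻¹ := by
  have h := PresentedGroup.one_of_mem (rels := glRels)
    (x := .of .r * .of .u * (.of .r)⁻¹ * .of .u) (by simp [glRels])
  rwa [map_mul, mul_eq_one_iff_eq_inv] at h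

theorem shat_sq : shat ^ 2 = uhat ^ 3 := by
  have h := PresentedGroup.mk_eq_mk_of_mul_inv_mem (rels := glRels)
    (x := .of .s ^ 2) (y := .of .u ^ 3) (by simp [glRels])
  rwa [map_pow, map_pow] at h

theorem uhat_pow_twelve : uhat ^ 12 = 1 := by
  rw [show 12 = 3 * 4 from rfl, pow_mul, ← shat_sq, ← pow_mul]
  exact shat_pow_eight

namespace GLplus

variable {G : Type*} [Group G]

def lift (u s r : G) (hs : s ^ 8 = 1) (hr : r ^ 2 = 1) (hrs : r * s * r⁻¹ = s⁻¹)
    (hru : r * u * r⁻¹ = u⁻¹) (hsu : s ^ 2 = u ^ 3) : GLplus →* G :=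
  PresentedGroup.toGroup (f := fun | .u => u | .s => s | .r => r) (by
    simp only [glRels, Set.mem_insert_iff, Set.mem_singleton_iff]
    rintro w (rfl | rfl | rfl | rfl | rfl) <;> simp [hs, hr, hrs, hru, hsu])

end GLplus

def uhatLift : DihedralGroup 12 →* GLplus :=
  DihedralGroup.lift uhat_pow_twelve rhat_sq rhat_mul_uhat_mul_rhat_inv

def shatLift : DihedralGroup 8 →* GLplus :=
  DihedralGroup.lift shat_pow_eight rhat_sq rhat_mul_shat_mul_rhat_inv

theorem uhatLift_r_one : uhatLift (r 1) = uhat := lift_r_one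

theorem uhatLift_sr_zero : uhatLift (sr 0) = rhat := lift_sr_zero

theorem shatLift_r_one : shatLift (r 1) = shat := lift_r_one

theorem shatLift_sr_zero : shatLift (sr 0) = rhat := lift_sr_zero

def dihedral4To12 : DihedralGroup 4 →* DihedralGroup 12 :=
  DihedralGroup.lift (a := r 1 ^ 3) (b := sr 0) (by rw [← pow_mul]; exact r_one_pow_n)
    (by rw [pow_two, sr_mul_self]) (by rw [r_one_pow, sr_mul_r_mul_sr_inv])

def dihedral4To8 : DihedralGroup 4 →* DihedralGroup 8 :=
  DihedralGroup.lift (a := r 1 ^ 2) (b := sr 0) (by rw [← pow_mul]; exact r_one_pow_n)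
    (by rw [pow_two, sr_mul_self]) (by rw [r_one_pow, sr_mul_r_mul_sr_inv])

theorem dihedral4To12_r_one : dihedral4To12 (r 1) = r 1 ^ 3 := lift_r_one

theorem dihedral4To12_sr_zero : dihedral4To12 (sr 0) = sr 0 := lift_sr_zero

theorem dihedral4To8_r_one : dihedral4To8 (r 1) = r 1 ^ 2 := lift_r_one

theorem dihedral4To8_sr_zero : dihedral4To8 (sr 0) = sr 0 := lift_sr_zero

theorem uhatLift_comp_dihedral4To12 :
    uhatLift.comp dihedral4To12 = shatLift.comp dihedral4To8 := by
  refine DihedralGroup.hom_ext ?_ ?_ <;> simp only [MonoidHom.comp_apply]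
  · rw [dihedral4To12_r_one, dihedral4To8_r_one, map_pow, map_pow, uhatLift_r_one,
      shatLift_r_one, shat_sq]
  · rw [dihedral4To12_sr_zero, dihedral4To8_sr_zero, uhatLift_sr_zero, shatLift_sr_zero]

abbrev DihedralAmalgam : Type := Monoid.PushoutI (fam dihedral4To12 dihedral4To8)

namespace DihedralAmalgam

def inl : DihedralGroup 12 →* DihedralAmalgam :=
  Monoid.PushoutI.of (φ := fam dihedral4To12 dihedral4To8) false

def inr : DihedralGroup 8 →* DihedralAmalgam :=
  Monoid.PushoutI.of (φ := fam dihedral4To12 dihedral4To8) true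

theorem inr_dihedral4To8 (x : DihedralGroup 4) : inr (dihedral4To8 x) = inl (dihedral4To12 x) :=
  (Monoid.PushoutI.of_apply_eq_base (fam dihedral4To12 dihedral4To8) true x).trans
    (Monoid.PushoutI.of_apply_eq_base (fam dihedral4To12 dihedral4To8) false x).symm

theorem inr_sr_zero : inr (sr 0) = inl (sr 0) := by
  have h := inr_dihedral4To8 (sr 0)
  rwa [dihedral4To8_sr_zero, dihedral4To12_sr_zero] at h

theorem inr_r_one_sq : inr (r 1) ^ 2 = inl (r 1) ^ 3 := by
  have h := inr_dihedral4To8 (r 1)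
  rwa [dihedral4To8_r_one, dihedral4To12_r_one, map_pow, map_pow] at h

def toGLplus : DihedralAmalgam →* GLplus :=
  Monoid.PushoutI.lift (fun | false => uhatLift | true => shatLift) (shatLift.comp dihedral4To8)
    (by rintro (_ | _); exacts [uhatLift_comp_dihedral4To12, rfl])

theorem toGLplus_inl (x : DihedralGroup 12) : toGLplus (inl x) = uhatLift x :=
  Monoid.PushoutI.lift_of (φ := fam dihedral4To12 dihedral4To8) _ _ _ (i := false) x

theorem toGLplus_inr (x : DihedralGroup 8) : toGLplus (inr x) = shatLift x :=
  Monoid.PushoutI.lift_of (φ := fam dihedral4To12 dihedral4To8) _ _ _ (i := true) x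

def ofGLplus : GLplus →* DihedralAmalgam :=
  GLplus.lift (inl (r 1)) (inr (r 1)) (inr (sr 0))
    (by rw [← map_pow, r_one_pow_n, map_one])
    (by rw [← map_pow, pow_two, sr_mul_self, map_one])
    (by rw [← map_inv, ← map_mul, ← map_mul, sr_mul_r_mul_sr_inv, map_inv])
    (by rw [inr_sr_zero, ← map_inv, ← map_mul, ← map_mul, sr_mul_r_mul_sr_inv, map_inv])
    inr_r_one_sq

theorem ofGLplus_uhat : ofGLplus uhat = inl (r 1) := rfl

theorem ofGLplus_shat : ofGLplus shat = inr (r 1) := rfl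

theorem ofGLplus_rhat : ofGLplus rhat = inr (sr 0) := rfl

theorem ofGLplus_comp_toGLplus : ofGLplus.comp toGLplus = MonoidHom.id _ := by
  refine Monoid.PushoutI.hom_ext_nonempty fun b => ?_
  cases b
  · show (ofGLplus.comp toGLplus).comp inl = inl
    refine DihedralGroup.hom_ext ?_ ?_ <;> simp only [MonoidHom.comp_apply, toGLplus_inl]
    · rw [uhatLift_r_one, ofGLplus_uhat]
    · rw [uhatLift_sr_zero, ofGLplus_rhat, inr_sr_zero]
  · show (ofGLplus.comp toGLplus).comp inr = inr
    refine DihedralGroup.hom_ext ?_ ?_ <;> simp only [MonoidHom.comp_apply, toGLplus_inr]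
    · rw [shatLift_r_one, ofGLplus_shat]
    · rw [shatLift_sr_zero, ofGLplus_rhat]

theorem toGLplus_comp_ofGLplus : toGLplus.comp ofGLplus = MonoidHom.id _ := by
  refine PresentedGroup.ext fun x => ?_
  cases x
  · exact (congrArg toGLplus ofGLplus_uhat).trans ((toGLplus_inl _).trans uhatLift_r_one)
  · exact (congrArg toGLplus ofGLplus_shat).trans ((toGLplus_inr _).trans shatLift_r_one)
  · exact (congrArg toGLplus ofGLplus_rhat).trans ((toGLplus_inr _).trans shatLift_sr_zero)

def mulEquivGLplus : DihedralAmalgam ≃* GLplus :=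
  toGLplus.toMulEquiv ofGLplus ofGLplus_comp_toGLplus toGLplus_comp_ofGLplus

end DihedralAmalgam

theorem glplus_is_amalgamated_product_general
    (f₁ : ZMod 4 →+ ZMod 12) (f₂ : ZMod 4 →+ ZMod 8)
    (hf₁ : f₁ 1 = 3) (hf₂ : f₂ 1 = 2)
    (φ₁ : DihedralGroup 4 →* DihedralGroup 12) (φ₂ : DihedralGroup 4 →* DihedralGroup 8)
    (hφ₁r : ∀ i : ZMod 4, φ₁ (DihedralGroup.r i) = DihedralGroup.r (f₁ i))
    (hφ₁sr : ∀ i : ZMod 4, φ₁ (DihedralGroup.sr i) = DihedralGroup.sr (f₁ i))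
    (hφ₂r : ∀ i : ZMod 4, φ₂ (DihedralGroup.r i) = DihedralGroup.r (f₂ i))
    (hφ₂sr : ∀ i : ZMod 4, φ₂ (DihedralGroup.sr i) = DihedralGroup.sr (f₂ i)) :
    ∃ Ψ : Monoid.PushoutI (fam φ₁ φ₂) ≃* GLplus,
      Ψ (Monoid.PushoutI.of (φ := fam φ₁ φ₂) false (DihedralGroup.r 1)) = uhat ∧
      Ψ (Monoid.PushoutI.of (φ := fam φ₁ φ₂) true (DihedralGroup.r 1)) = shat ∧
      Ψ (Monoid.PushoutI.of (φ := fam φ₁ φ₂) true (DihedralGroup.sr 0)) = rhat := by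
  obtain rfl : φ₁ = dihedral4To12 := DihedralGroup.hom_ext
    (by rw [hφ₁r, hf₁, dihedral4To12_r_one, r_one_pow]; rfl)
    (by rw [hφ₁sr, map_zero, dihedral4To12_sr_zero])
  obtain rfl : φ₂ = dihedral4To8 := DihedralGroup.hom_ext
    (by rw [hφ₂r, hf₂, dihedral4To8_r_one, r_one_pow]; rfl)
    (by rw [hφ₂sr, map_zero, dihedral4To8_sr_zero])
  open DihedralAmalgam in
  exact ⟨mulEquivGLplus, (toGLplus_inl _).trans uhatLift_r_one,
    (toGLplus_inr _).trans shatLift_r_one, (toGLplus_inr _).trans shatLift_sr_zero⟩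

/-- `GL⁺(2,ℤ)` is the amalgamated free product `D₂₄ *_{D₈} D₁₆`, amalgamated along
the homomorphisms induced by the additive maps `ZMod 4 → ZMod 12, i ↦ 3i` and
`ZMod 4 → ZMod 8, i ↦ 2i`, via an isomorphism sending `r 1` of `D₂₄` to `û`,
`r 1` of `D₁₆` to `ŝ`, and `sr 0` of `D₁₆` to `r̂`. -/
theorem glplus_is_amalgamated_product
    (f₁ : ZMod 4 →+ ZMod 12) (f₂ : ZMod 4 →+ ZMod 8)
    (hf₁ : f₁ 1 = 3) (hf₂ : f₂ 1 = 2)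
    (φ₁ : DihedralGroup 4 →* DihedralGroup 12) (φ₂ : DihedralGroup 4 →* DihedralGroup 8)
    (hφ₁ : Function.Injective φ₁) (hφ₂ : Function.Injective φ₂)
    (hφ₁r : ∀ i : ZMod 4, φ₁ (DihedralGroup.r i) = DihedralGroup.r (f₁ i))
    (hφ₁sr : ∀ i : ZMod 4, φ₁ (DihedralGroup.sr i) = DihedralGroup.sr (f₁ i))
    (hφ₂r : ∀ i : ZMod 4, φ₂ (DihedralGroup.r i) = DihedralGroup.r (f₂ i))
    (hφ₂sr : ∀ i : ZMod 4, φ₂ (DihedralGroup.sr i) = DihedralGroup.sr (f₂ i)) :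
    ∃ Ψ : Monoid.PushoutI (fam φ₁ φ₂) ≃* GLplus,
      Ψ (Monoid.PushoutI.of (φ := fam φ₁ φ₂) false (DihedralGroup.r 1)) = uhat ∧
      Ψ (Monoid.PushoutI.of (φ := fam φ₁ φ₂) true (DihedralGroup.r 1)) = shat ∧
      Ψ (Monoid.PushoutI.of (φ := fam φ₁ φ₂) true (DihedralGroup.sr 0)) = rhat :=
  glplus_is_amalgamated_product_general f₁ f₂ hf₁ hf₂ φ₁ φ₂ hφ₁r hφ₁sr hφ₂r hφ₂sr
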